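/- arXiv:2211.02908 — 7 statements merged into one kernel-verified Lean document; each statement's English description precedes it below -/
import Mathlib

section
/- Let P be a polynomial with integer coefficients, of degree d ≥ 2, having at least two distinct complex roots. Let a and b be distinct positive integers. Then the bivariate polynomial a·P(y) − b·P(x) has no factor of degree 1 in ℂ[x,y]. -/
open Polynomial MvPolynomial

private lemma deg_one_structure (G : MvPolynomial (Fin 2) ℂ) (hG : G.totalDegree ≤ 1) :
    G = MvPolynomial.C (MvPolynomial.coeff 0 G)
      + MvPolynomial.C (MvPolynomial.coeff (Finsupp.single 0 1) G) * MvPolynomial.X 0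
      + MvPolynomial.C (MvPolynomial.coeff (Finsupp.single 1 1) G) * MvPolynomial.X 1 := by
  apply MvPolynomial.ext
  intro m
  have hsum : ∑ i ∈ m.support, m i = m 0 + m 1 := by
    rw [Finset.sum_subset (Finset.subset_univ _), Fin.sum_univ_two]
    intro i _ hi
    simpa using (Finsupp.notMem_support_iff.mp hi)
  rw [MvPolynomial.coeff_add, MvPolynomial.coeff_add, MvPolynomial.coeff_C,
    MvPolynomial.coeff_C_mul, MvPolynomial.coeff_C_mul, MvPolynomial.coeff_X',
    MvPolynomial.coeff_X']
  by_cases h2 : 2 ≤ m 0 + m 1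
  · have hz : MvPolynomial.coeff m G = 0 := by
      apply MvPolynomial.coeff_eq_zero_of_totalDegree_lt
      rw [hsum]; omega
    have hm0 : ¬ (0 : Fin 2 →₀ ℕ) = m := by
      intro h
      have h0 := DFunLike.congr_fun h 0
      have h1 := DFunLike.congr_fun h 1
      simp at h0 h1
      omega
    have hm1 : ¬ Finsupp.single (0 : Fin 2) 1 = m := by
      intro h
      have h0 := DFunLike.congr_fun h 0
      have h1 := DFunLike.congr_fun h 1
      simp [Finsupp.single_apply] at h0 h1
      omega
    have hm2 : ¬ Finsupp.single (1 : Fin 2) 1 = m := by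
      intro h
      have h0 := DFunLike.congr_fun h 0
      have h1 := DFunLike.congr_fun h 1
      simp [Finsupp.single_apply] at h0 h1
      omega
    simp [hz, hm0, hm1, hm2]
  · -- m 0 + m 1 ≤ 1
    have h01 : (m 0 = 0 ∧ m 1 = 0) ∨ (m 0 = 1 ∧ m 1 = 0) ∨ (m 0 = 0 ∧ m 1 = 1) := by omega
    rcases h01 with ⟨h0, h1⟩ | ⟨h0, h1⟩ | ⟨h0, h1⟩
    · have hm : m = 0 := by
        ext i; fin_cases i <;> simpa [h0, h1]
      subst hm
      have hm1 : ¬ Finsupp.single (0 : Fin 2) 1 = 0 := by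
        intro h
        have := DFunLike.congr_fun h 0
        simp at this
      have hm2 : ¬ Finsupp.single (1 : Fin 2) 1 = 0 := by
        intro h
        have := DFunLike.congr_fun h 1
        simp at this
      simp [hm1, hm2]
    · have hm : m = Finsupp.single (0 : Fin 2) 1 := by
        ext i; fin_cases i <;> simp [h0, h1, Finsupp.single_apply]
      subst hm
      have hm0 : ¬ (0 : Fin 2 →₀ ℕ) = Finsupp.single (0 : Fin 2) 1 := by
        intro h
        have := DFunLike.congr_fun h 0
        simp at this
      have hm2 : ¬ Finsupp.single (1 : Fin 2) 1 = Finsupp.single (0 : Fin 2) 1 := by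
        intro h
        have := DFunLike.congr_fun h 0
        simp [Finsupp.single_apply] at this
      simp [hm0, hm2]
    · have hm : m = Finsupp.single (1 : Fin 2) 1 := by
        ext i; fin_cases i <;> simp [h0, h1, Finsupp.single_apply]
      subst hm
      have hm0 : ¬ (0 : Fin 2 →₀ ℕ) = Finsupp.single (1 : Fin 2) 1 := by
        intro h
        have := DFunLike.congr_fun h 1
        simp at this
      have hm1 : ¬ Finsupp.single (0 : Fin 2) 1 = Finsupp.single (1 : Fin 2) 1 := by
        intro h
        have := DFunLike.congr_fun h 1
        simp [Finsupp.single_apply] at this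
      simp [hm0, hm1]

private lemma eval_aeval_X (σ : Fin 2 → ℂ) (i : Fin 2) (p : Polynomial ℂ) :
    MvPolynomial.eval σ (Polynomial.aeval (MvPolynomial.X i : MvPolynomial (Fin 2) ℂ) p)
      = p.eval (σ i) := by
  rw [Polynomial.aeval_def, Polynomial.hom_eval₂, MvPolynomial.eval_X]
  have hc : (MvPolynomial.eval σ).comp (algebraMap ℂ (MvPolynomial (Fin 2) ℂ))
      = RingHom.id ℂ := by
    ext c; simp
  rw [hc]
  rfl

theorem stmt_0 (P : Polynomial ℤ) (hd : 2 ≤ P.natDegree)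
    (hroots : 2 ≤ (P.map (Int.castRingHom ℂ)).roots.toFinset.card)
    (a b : ℕ) (ha : 0 < a) (hb : 0 < b) (hab : a ≠ b) :
    ¬ ∃ G : MvPolynomial (Fin 2) ℂ, G.totalDegree = 1 ∧
      G ∣ ((a : ℂ) • Polynomial.aeval (MvPolynomial.X 1 : MvPolynomial (Fin 2) ℂ)
            (P.map (Int.castRingHom ℂ))
          - (b : ℂ) • Polynomial.aeval (MvPolynomial.X 0 : MvPolynomial (Fin 2) ℂ)
            (P.map (Int.castRingHom ℂ))) := by
  rintro ⟨G, hGdeg, Q', hQ⟩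
  set Pc : Polynomial ℂ := P.map (Int.castRingHom ℂ) with hPc_def
  have hPcd : Pc.natDegree = P.natDegree :=
    Polynomial.natDegree_map_eq_of_injective (fun x y hxy => by
      exact Int.cast_injective (α := ℂ) (by simpa using hxy)) P
  have hPc2 : 2 ≤ Pc.natDegree := by rw [hPcd]; exact hd
  have hPc0 : Pc ≠ 0 := fun h => by simp [h] at hPc2
  have haC : (a : ℂ) ≠ 0 := Nat.cast_ne_zero.mpr ha.ne'
  have hbC : (b : ℂ) ≠ 0 := Nat.cast_ne_zero.mpr hb.ne'
  set h := MvPolynomial.coeff 0 G with hh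
  set f := MvPolynomial.coeff (Finsupp.single 0 1) G with hf
  set g := MvPolynomial.coeff (Finsupp.single 1 1) G with hg
  have hGform := deg_one_structure G (le_of_eq hGdeg)
  rw [← hh, ← hf, ← hg] at hGform
  -- key evaluation fact: whenever h + f*x + g*y = 0, a * Pc.eval y = b * Pc.eval x
  have key : ∀ x y : ℂ, h + f * x + g * y = 0 →
      (a : ℂ) * Pc.eval y = (b : ℂ) * Pc.eval x := by
    intro x y hxy
    have hQe := congrArg (MvPolynomial.eval ![x, y]) hQ
    have hGe : MvPolynomial.eval ![x, y] G = h + f * x + g * y := by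
      rw [hGform]; simp
    rw [map_mul, hGe, hxy, zero_mul] at hQe
    rw [map_sub] at hQe
    simp only [MvPolynomial.smul_eq_C_mul, map_mul, MvPolynomial.eval_C,
      eval_aeval_X] at hQe
    simp only [Matrix.cons_val_one, Matrix.cons_val_zero, Matrix.head_cons] at hQe
    exact sub_eq_zero.mp hQe
  have hfg : f ≠ 0 ∨ g ≠ 0 := by
    by_contra hc
    push_neg at hc
    rw [hc.1, hc.2] at hGform
    simp only [map_zero, zero_mul, add_zero] at hGform
    rw [hGform, MvPolynomial.totalDegree_C] at hGdeg
    exact zero_ne_one hGdeg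
  have hconst : ∀ (c k : ℂ), c ≠ 0 → (∀ y : ℂ, c * Pc.eval y = k) → False := by
    intro c k hc hy
    have hCk : Polynomial.C c * Pc = Polynomial.C k :=
      Polynomial.funext (fun r => by simp [hy r])
    have hdeg := congrArg Polynomial.natDegree hCk
    rw [Polynomial.natDegree_C_mul hc, Polynomial.natDegree_C] at hdeg
    omega
  by_cases hgz : g = 0
  · -- vertical line case
    have hf0 : f ≠ 0 := hfg.resolve_right (fun hh' => hh' hgz)
    refine hconst (a : ℂ) ((b : ℂ) * Pc.eval (-h / f)) haC (fun y => ?_)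
    exact key (-h / f) y (by rw [hgz]; field_simp; ring)
  · -- affine line y = α x + β
    set α : ℂ := -f / g with hα_def
    set β : ℂ := -h / g with hβ_def
    have hkey : ∀ x : ℂ, (a : ℂ) * Pc.eval (α * x + β) = (b : ℂ) * Pc.eval x := by
      intro x
      apply key
      rw [hα_def, hβ_def]
      field_simp
      ring
    by_cases hαz : α = 0
    · refine hconst (b : ℂ) ((a : ℂ) * Pc.eval β) hbC (fun x => ?_)
      have := hkey x
      rw [hαz, zero_mul, zero_add] at this
      exact this.symm
    · set L : Polynomial ℂ := Polynomial.C α * Polynomial.X + Polynomial.C β with hL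
      have hqq : Polynomial.C (a : ℂ) * (Pc.comp L) = Polynomial.C (b : ℂ) * Pc := by
        apply Polynomial.funext
        intro r
        simp only [Polynomial.eval_mul, Polynomial.eval_C, Polynomial.eval_comp, hL,
          Polynomial.eval_add, Polynomial.eval_X]
        exact hkey r
      have hdL : L.natDegree = 1 := Polynomial.natDegree_linear hαz
      have hlead : (a : ℂ) * α ^ Pc.natDegree = (b : ℂ) := by
        have hle := congrArg Polynomial.leadingCoeff hqq
        rw [Polynomial.leadingCoeff_mul, Polynomial.leadingCoeff_mul,
          Polynomial.leadingCoeff_C, Polynomial.leadingCoeff_C,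
          Polynomial.leadingCoeff_comp (by rw [hdL]; norm_num),
          Polynomial.leadingCoeff_linear hαz] at hle
        have hlc : Pc.leadingCoeff ≠ 0 := Polynomial.leadingCoeff_ne_zero.mpr hPc0
        have : (a : ℂ) * α ^ Pc.natDegree * Pc.leadingCoeff = (b : ℂ) * Pc.leadingCoeff := by
          linear_combination hle
        exact mul_right_cancel₀ hlc this
      set S := Pc.roots.toFinset with hS_def
      have hScard : 2 ≤ S.card := hroots
      set φ : ℂ → ℂ := fun z => α * z + β with hφ
      have hφinj : Function.Injective φ := by
        intro u v huv
        simp only [hφ] at huv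
        exact mul_left_cancel₀ hαz (add_right_cancel huv)
      have hφS : ∀ z ∈ S, φ z ∈ S := by
        intro z hz
        rw [hS_def, Multiset.mem_toFinset, Polynomial.mem_roots'] at hz ⊢
        refine ⟨hPc0, ?_⟩
        have hkz := hkey z
        rw [show Pc.eval z = 0 from hz.2, mul_zero] at hkz
        exact (mul_eq_zero.mp hkz).resolve_left haC
      have hiter : ∀ (k : ℕ), ∀ z ∈ S, φ^[k] z ∈ S := by
        intro k
        induction k with
        | zero => intro z hz; simpa using hz
        | succ n ih =>
          intro z hz
          rw [Function.iterate_succ_apply]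
          exact ih _ (hφS z hz)
      have hdiff : ∀ (k : ℕ) (z w : ℂ), φ^[k] z - φ^[k] w = α ^ k * (z - w) := by
        intro k
        induction k with
        | zero => intro z w; simp
        | succ n ih =>
          intro z w
          rw [Function.iterate_succ_apply', Function.iterate_succ_apply']
          simp only [hφ]
          have := ih z w
          rw [pow_succ]
          linear_combination α * this
      have hperiod : ∀ r ∈ S, ∃ p : ℕ, 0 < p ∧ φ^[p] r = r := by
        intro r hr
        have hmap : ∀ k ∈ Finset.range (S.card + 1), φ^[k] r ∈ S := fun k _ => hiter k r hr
        obtain ⟨i, hi, j, hj, hij, hEq⟩ :=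
          Finset.exists_ne_map_eq_of_card_lt_of_maps_to (by simp) hmap
        rcases Nat.lt_or_ge i j with hlt | hge
        · refine ⟨j - i, by omega, ?_⟩
          apply hφinj.iterate i
          rw [← Function.iterate_add_apply, (by omega : i + (j - i) = j)]
          exact hEq.symm
        · have hlt' : j < i := by omega
          refine ⟨i - j, by omega, ?_⟩
          apply hφinj.iterate j
          rw [← Function.iterate_add_apply, (by omega : j + (i - j) = i)]
          exact hEq
      obtain ⟨r1, hr1, r2, hr2, hr12⟩ := Finset.one_lt_card.mp hScard
      obtain ⟨p1, hp1pos, hp1⟩ := hperiod r1 hr1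
      obtain ⟨p2, hp2pos, hp2⟩ := hperiod r2 hr2
      set N := p1 * p2 with hN_def
      have hN1 : φ^[N] r1 = r1 := by
        rw [hN_def, Function.iterate_mul]
        exact Function.iterate_fixed hp1 p2
      have hN2 : φ^[N] r2 = r2 := by
        rw [hN_def, mul_comm, Function.iterate_mul]
        exact Function.iterate_fixed hp2 p1
      have hαN : α ^ N = 1 := by
        have hd12 := hdiff N r1 r2
        rw [hN1, hN2] at hd12
        have hne : r1 - r2 ≠ 0 := sub_ne_zero.mpr hr12
        have : (1 : ℂ) * (r1 - r2) = α ^ N * (r1 - r2) := by linear_combination hd12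
        exact (mul_right_cancel₀ hne this).symm
      have hfin : (a : ℂ) ^ N = (b : ℂ) ^ N := by
        have hpow := congrArg (· ^ N) hlead
        simp only [mul_pow] at hpow
        have h1 : (α ^ Pc.natDegree) ^ N = 1 := by
          rw [← pow_mul, mul_comm, pow_mul, hαN, one_pow]
        rw [h1, mul_one] at hpow
        exact hpow
      have hnat : a ^ N = b ^ N := by exact_mod_cast hfin
      have hN0 : N ≠ 0 := by positivity
      exact hab (Nat.pow_left_injective hN0 hnat)
end

section
/- Let P ∈ ℤ[x] be a polynomial of degree d ≥ 1 with positive leading coefficient. Suppose an invertible affine map L(x) = f·x + h on ℂ permutes the multiset of complex roots of P (i.e., a·P(L(x)) = b·P(x) for distinct positive integers a, b, where f^d = b/a). Then P has at most one distinct complex root. -/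
open Polynomial

/-!
Comparing leading coefficients gives `a * f ^ d = b`, so `‖f‖ ≠ 1`. The map `z ↦ f z + h` sends
roots to roots injectively, so it permutes the finite set of roots; since it multiplies the
distance to its fixed point `c` by `‖f‖`, the sum of the distances of the roots to `c` is
multiplied by `‖f‖ ≠ 1` and must vanish.
-/

theorem Finset.subset_singleton_of_mapsTo_of_norm_sub_eq_mul {E : Type*}
    [NormedAddCommGroup E] (S : Finset E) {φ : E → E} {c : E} {r : ℝ} (hr : r ≠ 1)
    (hmaps : Set.MapsTo φ S S) (hinj : Set.InjOn φ S)
    (hnorm : ∀ x, ‖φ x - c‖ = r * ‖x - c‖) : S ⊆ {c} := by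
  have hsurj : Set.SurjOn φ S S :=
    ((S.finite_toSet.injOn_iff_bijOn_of_mapsTo hmaps).1 hinj).surjOn
  have hsum : ∑ x ∈ S, ‖x - c‖ = r * ∑ x ∈ S, ‖x - c‖ := by
    rw [Finset.mul_sum]
    exact (Finset.sum_nbij φ hmaps hinj hsurj fun x _ => (hnorm x).symm).symm
  have hzero : ∑ x ∈ S, ‖x - c‖ = 0 := by
    have : (r - 1) * ∑ x ∈ S, ‖x - c‖ = 0 := by linarith
    exact (mul_eq_zero.1 this).resolve_left (sub_ne_zero.2 hr)
  intro x hx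
  rw [Finset.sum_eq_zero_iff_of_nonneg fun _ _ => norm_nonneg _] at hzero
  simpa [sub_eq_zero] using hzero x hx

theorem Finset.card_le_one_of_mapsTo_affine {K : Type*} [NormedField K] (S : Finset K)
    {f h : K} (hf0 : f ≠ 0) (hf : ‖f‖ ≠ 1) (hmaps : ∀ z ∈ S, f * z + h ∈ S) : S.card ≤ 1 := by
  have hf1 : 1 - f ≠ 0 := sub_ne_zero.2 fun h1 => hf (h1 ▸ norm_one)
  set c := h / (1 - f)
  have hnorm : ∀ z, ‖f * z + h - c‖ = ‖f‖ * ‖z - c‖ := fun z => by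
    rw [← norm_mul, mul_sub]; congr 1; simp only [c]; field_simp; ring
  have hinj : Set.InjOn (fun z => f * z + h) S := fun x _ y _ hxy => by
    simpa [hf0] using hxy
  calc S.card ≤ ({c} : Finset K).card :=
        card_le_card (S.subset_singleton_of_mapsTo_of_norm_sub_eq_mul hf hmaps hinj hnorm)
    _ = 1 := card_singleton c

theorem Polynomial.eval_mem_roots_of_smul_comp_eq {R : Type*} [CommRing R] [IsDomain R]
    {Q q : R[X]} {a b : R} (ha : a ≠ 0) (hid : a • Q.comp q = b • Q) {z : R}
    (hz : z ∈ Q.roots) : q.eval z ∈ Q.roots := by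
  obtain ⟨hQ, hz⟩ := mem_roots'.1 hz
  refine mem_roots'.2 ⟨hQ, ?_⟩
  have := congrArg (eval z) hid
  simp only [eval_smul, eval_comp, hz.eq_zero, smul_eq_mul, mul_zero] at this
  exact (mul_eq_zero.1 this).resolve_left ha

theorem Polynomial.mul_pow_natDegree_eq_of_smul_comp_eq {R : Type*} [CommRing R] [IsDomain R]
    {Q : R[X]} (hQ : Q ≠ 0) {a b f h : R} (hf : f ≠ 0)
    (hid : a • Q.comp (C f * X + C h) = b • Q) : a * f ^ Q.natDegree = b := by
  have := congrArg leadingCoeff hid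
  rw [smul_eq_C_mul, smul_eq_C_mul, leadingCoeff_mul, leadingCoeff_mul, leadingCoeff_C,
    leadingCoeff_C, leadingCoeff_comp (by rw [natDegree_linear hf]; norm_num),
    leadingCoeff_linear hf, ← mul_assoc, mul_right_comm] at this
  exact mul_right_cancel₀ (leadingCoeff_ne_zero.2 hQ) this

theorem stmt_2_general (P : Polynomial ℤ) (hd : 1 ≤ P.natDegree)
    (a b : ℕ) (ha : 0 < a) (hab : a ≠ b) (f h : ℂ) (hf : f ≠ 0)
    (hid : (a : ℂ) • (P.map (Int.castRingHom ℂ)).comp (C f * X + C h)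
          = (b : ℂ) • P.map (Int.castRingHom ℂ)) :
    (P.map (Int.castRingHom ℂ)).roots.toFinset.card ≤ 1 := by
  set Q := P.map (Int.castRingHom ℂ)
  have hQ : Q ≠ 0 :=
    (Polynomial.map_ne_zero_iff Int.cast_injective).2 (ne_zero_of_natDegree_gt hd)
  have hfd := mul_pow_natDegree_eq_of_smul_comp_eq hQ hf hid
  have hnorm : ‖f‖ ≠ 1 := fun h1 => hab <| by
    have := congrArg norm hfd
    rwa [norm_mul, norm_pow, h1, one_pow, mul_one, Complex.norm_natCast,
      Complex.norm_natCast, Nat.cast_inj] at this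
  have ha0 : (a : ℂ) ≠ 0 := Nat.cast_ne_zero.2 ha.ne'
  refine Finset.card_le_one_of_mapsTo_affine _ (h := h) hf hnorm fun z hz => ?_
  rw [Multiset.mem_toFinset] at hz ⊢
  simpa using eval_mem_roots_of_smul_comp_eq ha0 hid hz

theorem stmt_2 (P : Polynomial ℤ) (hd : 1 ≤ P.natDegree) (hlc : 0 < P.leadingCoeff)
    (a b : ℕ) (ha : 0 < a) (hb : 0 < b) (hab : a ≠ b) (f h : ℂ) (hf : f ≠ 0)
    (hid : (a : ℂ) • (P.map (Int.castRingHom ℂ)).comp (C f * X + C h)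
          = (b : ℂ) • P.map (Int.castRingHom ℂ)) :
    (P.map (Int.castRingHom ℂ)).roots.toFinset.card ≤ 1 :=
  stmt_2_general P hd a b ha hab f h hf hid
end

section
/- Let P, Q ∈ ℤ[x] with Q(x) ∣ P(x) and P(x) ∣ Q(x)^e in ℤ[x] for some positive integer e. If z is a positive integer, x is an integer, and z ∣ P(x), then ℓ ∣ Q(x), where ℓ is the smallest positive integer with z ∣ ℓ^e. -/
lemma my_gcd_pow (a b e : ℕ) : Nat.gcd (a ^ e) (b ^ e) = Nat.gcd a b ^ e := by
  rcases Nat.eq_zero_or_pos e with he | he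
  · simp [he]
  rcases Nat.eq_zero_or_pos a with ha | ha
  · simp [ha, zero_pow he.ne']
  · have hg : 0 < Nat.gcd a b := Nat.gcd_pos_of_pos_left b ha
    have hco : Nat.Coprime (a / Nat.gcd a b) (b / Nat.gcd a b) :=
      Nat.coprime_div_gcd_div_gcd hg
    calc Nat.gcd (a ^ e) (b ^ e)
        = Nat.gcd ((Nat.gcd a b)^e * (a / Nat.gcd a b)^e)
            ((Nat.gcd a b)^e * (b / Nat.gcd a b)^e) := by
          rw [← mul_pow, ← mul_pow, Nat.mul_div_cancel' (Nat.gcd_dvd_left a b),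
            Nat.mul_div_cancel' (Nat.gcd_dvd_right a b)]
      _ = (Nat.gcd a b)^e * Nat.gcd ((a / Nat.gcd a b)^e) ((b / Nat.gcd a b)^e) :=
          Nat.gcd_mul_left _ _ _
      _ = (Nat.gcd a b)^e := by rw [Nat.Coprime.gcd_eq_one (Nat.Coprime.pow e e hco), mul_one]

theorem stmt_5 (P Q : Polynomial ℤ) (e : ℕ) (he : 0 < e)
    (hQP : Q ∣ P) (hPQ : P ∣ Q ^ e) (z : ℕ) (hz : 0 < z) (x : ℤ)
    (hzP : (z : ℤ) ∣ P.eval x) (ℓ : ℕ) (hℓ : ℓ = sInf {m : ℕ | 0 < m ∧ z ∣ m ^ e}) :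
    (ℓ : ℤ) ∣ Q.eval x := by
  have hzQe : (z : ℤ) ∣ (Q.eval x) ^ e := by
    obtain ⟨R, hR⟩ := hPQ
    have : (Q ^ e).eval x = P.eval x * R.eval x := by rw [hR, Polynomial.eval_mul]
    rw [Polynomial.eval_pow] at this
    rw [this]
    exact hzP.mul_right _
  set n := (Q.eval x).natAbs with hn
  have hzn : z ∣ n ^ e := by
    have := Int.natAbs_dvd_natAbs.mpr hzQe
    simpa [Int.natAbs_pow] using this
  rcases eq_or_ne (Q.eval x) 0 with h0 | h0
  · rw [h0]; exact dvd_zero _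
  have hnpos : 0 < n := Int.natAbs_pos.mpr h0
  have hne : {m : ℕ | 0 < m ∧ z ∣ m ^ e}.Nonempty :=
    ⟨z, hz, dvd_pow_self z he.ne'⟩
  have hmem : ℓ ∈ {m : ℕ | 0 < m ∧ z ∣ m ^ e} := hℓ ▸ Nat.sInf_mem hne
  obtain ⟨hℓpos, hzℓ⟩ := hmem
  set g := Nat.gcd ℓ n with hg
  have hzg : z ∣ g ^ e := by
    rw [hg, ← my_gcd_pow]
    exact Nat.dvd_gcd hzℓ hzn
  have hgpos : 0 < g := Nat.gcd_pos_of_pos_left n hℓpos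
  have hle : ℓ ≤ g := hℓ ▸ Nat.sInf_le ⟨hgpos, hzg⟩
  have hgl : ℓ = g := Nat.le_antisymm hle (Nat.le_of_dvd hℓpos (Nat.gcd_dvd_left _ _))
  have hln : ℓ ∣ n := hgl ▸ Nat.gcd_dvd_right ℓ n
  exact Int.dvd_natAbs.mp (Int.natCast_dvd_natCast.mpr hln)
end

section
/- Let u_1, …, u_k and N be positive integers with k ≥ 2, let e ≥ 1, and set z = u_1·u_2···u_k. Then the product over j from 1 to k of min(N, u_j^{1/e}) is at least min(N^2, N·max_i (z/u_i)^{1/e}, z^{1/e}). Equivalently, N^k / ∏_j min(N, u_j^{1/e}) ≤ N^{k−2} + N^{k−1}/min_i (z/u_i)^{1/e} + N^k/z^{1/e}. -/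
theorem stmt_9 (k : ℕ) (hk : 2 ≤ k) (u : Fin k → ℕ) (hu : ∀ j, 0 < u j)
    (N e : ℕ) (hN : 0 < N) (he : 0 < e) (z : ℕ) (hz : z = ∏ j, u j) :
    (N : ℝ) ^ k / ∏ j, min (N : ℝ) ((u j : ℝ) ^ ((1 : ℝ) / e))
      ≤ (N : ℝ) ^ (k - 2)
        + (N : ℝ) ^ (k - 1) /
            (Finset.univ.inf' (Finset.univ_nonempty_iff.mpr (by
              exact Fin.pos_iff_nonempty.mp (by omega)))
              (fun i : Fin k => ((z : ℝ) / (u i : ℝ)) ^ ((1 : ℝ) / e)))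
        + (N : ℝ) ^ k / (z : ℝ) ^ ((1 : ℝ) / e) := by
  have hNpos : (0:ℝ) < N := by exact_mod_cast hN
  have hN1 : (1:ℝ) ≤ N := by exact_mod_cast hN
  have hepos : (0:ℝ) ≤ (1:ℝ)/e := by positivity
  have hzpos : (0:ℝ) < z := by
    have : 0 < z := hz ▸ Finset.prod_pos (fun j _ => hu j)
    exact_mod_cast this
  have hzcast : (z:ℝ) = ∏ j, (u j : ℝ) := by rw [hz]; push_cast; ring
  set f : Fin k → ℝ := fun j => min (N:ℝ) ((u j:ℝ)^((1:ℝ)/e)) with hf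
  have hf1 : ∀ j, 1 ≤ f j := fun j => le_min hN1
    (Real.one_le_rpow (by exact_mod_cast hu j) hepos)
  have hfpos : (0:ℝ) < ∏ j, f j :=
    Finset.prod_pos (fun j _ => lt_of_lt_of_le one_pos (hf1 j))
  set hne : (Finset.univ : Finset (Fin k)).Nonempty :=
      (Finset.univ_nonempty_iff.mpr (Fin.pos_iff_nonempty.mp (by omega)))
  set M : ℝ := Finset.univ.inf' hne
      (fun i : Fin k => ((z : ℝ) / (u i : ℝ)) ^ ((1 : ℝ) / e)) with hM
  have hMpos : 0 < M := by
    rw [hM, Finset.lt_inf'_iff]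
    intro i _
    have : (0:ℝ) < (z:ℝ)/(u i:ℝ) := by
      have : (0:ℝ) < u i := by exact_mod_cast hu i
      positivity
    exact Real.rpow_pos_of_pos this _
  have hterm1 : (0:ℝ) ≤ (N:ℝ)^(k-2) := by positivity
  have hterm2 : (0:ℝ) ≤ (N:ℝ)^(k-1) / M := by positivity
  have hterm3 : (0:ℝ) ≤ (N:ℝ)^k / (z:ℝ)^((1:ℝ)/e) := by positivity
  set T : Finset (Fin k) :=
    Finset.univ.filter (fun j => (N:ℝ) ≤ (u j:ℝ)^((1:ℝ)/e)) with hT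
  rcases Nat.lt_or_ge T.card 2 with hc | hc
  · interval_cases h : T.card
    · -- no index with N ≤ u_j^{1/e}: all f j = u_j^{1/e}
      have hTe : T = ∅ := Finset.card_eq_zero.mp h
      have hfe : ∀ j, f j = (u j:ℝ)^((1:ℝ)/e) := by
        intro j
        have : j ∉ T := by rw [hTe]; exact Finset.notMem_empty j
        simp only [hT, Finset.mem_filter, Finset.mem_univ, true_and, not_le] at this
        exact min_eq_right this.le
      have hprod : ∏ j, f j = (z:ℝ)^((1:ℝ)/e) := by
        rw [hzcast, ← Real.finset_prod_rpow _ _ (fun i _ => by positivity)]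
        exact Finset.prod_congr rfl (fun j _ => hfe j)
      rw [hprod]
      linarith
    · -- exactly one index i with f i = N
      obtain ⟨i, hTi⟩ := Finset.card_eq_one.mp h
      have hfi : f i = (N:ℝ) := by
        have : i ∈ T := hTi ▸ Finset.mem_singleton_self i
        simp only [hT, Finset.mem_filter, Finset.mem_univ, true_and] at this
        exact min_eq_left this
      have hfj : ∀ j, j ≠ i → f j = (u j:ℝ)^((1:ℝ)/e) := by
        intro j hj
        have : j ∉ T := by rw [hTi]; simpa using hj
        simp only [hT, Finset.mem_filter, Finset.mem_univ, true_and, not_le] at this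
        exact min_eq_right this.le
      have hui : (0:ℝ) < u i := by exact_mod_cast hu i
      have herase : ∏ j ∈ Finset.univ.erase i, (u j:ℝ) = (z:ℝ)/(u i:ℝ) := by
        rw [eq_div_iff (ne_of_gt hui), hzcast, mul_comm]
        exact Finset.mul_prod_erase Finset.univ (fun j => ((u j : ℕ) : ℝ)) (Finset.mem_univ i)
      have hprod : ∏ j, f j = (N:ℝ) * ((z:ℝ)/(u i:ℝ))^((1:ℝ)/e) := by
        rw [← Finset.mul_prod_erase _ _ (Finset.mem_univ i), hfi, ← herase,
          ← Real.finset_prod_rpow _ _ (fun j _ => by positivity)]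
        congr 1
        exact Finset.prod_congr rfl (fun j hj => hfj j (Finset.ne_of_mem_erase hj))
      have hMle : M ≤ ((z:ℝ)/(u i:ℝ))^((1:ℝ)/e) := by
        rw [hM]; exact Finset.inf'_le _ (Finset.mem_univ i)
      have h1 : (N:ℝ)^k / ∏ j, f j ≤ (N:ℝ)^(k-1) / M := by
        rw [hprod]
        have hk1 : (N:ℝ)^k = (N:ℝ) * (N:ℝ)^(k-1) := by
          rw [← pow_succ']; congr 1; omega
        rw [hk1, mul_div_mul_left _ _ (ne_of_gt hNpos)]
        gcongr
      linarith
  · -- at least two indices with f = N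
    obtain ⟨i, j, hi, hj, hij⟩ := Finset.one_lt_card_iff.mp hc
    have hfi : f i = (N:ℝ) := by
      simp only [hT, Finset.mem_filter, Finset.mem_univ, true_and] at hi
      exact min_eq_left hi
    have hfj : f j = (N:ℝ) := by
      simp only [hT, Finset.mem_filter, Finset.mem_univ, true_and] at hj
      exact min_eq_left hj
    have hge : (N:ℝ)^2 ≤ ∏ l, f l := by
      have hrest : (1:ℝ) ≤ ∏ l ∈ (Finset.univ.erase i).erase j, f l := by
        calc (1:ℝ) = ∏ _l ∈ (Finset.univ.erase i).erase j, (1:ℝ) := by simp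
          _ ≤ ∏ l ∈ (Finset.univ.erase i).erase j, f l :=
            Finset.prod_le_prod (by simp) (fun l _ => hf1 l)
      have hmem : j ∈ Finset.univ.erase i := by
        simp [hij.symm]
      rw [← Finset.mul_prod_erase _ _ (Finset.mem_univ i),
        ← Finset.mul_prod_erase _ _ hmem, hfi, hfj]
      nlinarith
    have h1 : (N:ℝ)^k / ∏ l, f l ≤ (N:ℝ)^(k-2) := by
      calc (N:ℝ)^k / ∏ l, f l ≤ (N:ℝ)^k / (N:ℝ)^2 := by gcongr
        _ = (N:ℝ)^(k-2) := by
            rw [pow_sub₀ _ (ne_of_gt hNpos) hk, ← div_eq_mul_inv]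
    linarith
end

section
/- Let P ∈ ℤ[x] be a polynomial of degree d ≥ 2 with at least two distinct complex roots, and let k be a positive integer. Then the number of tuples (x_1,…,x_k,y_1,…,y_k) ∈ {1,…,N}^{2k} with min(x_1,…,x_k,y_1,…,y_k) ≤ n_0 (for any fixed n_0) satisfying P(x_1)···P(x_k) = P(y_1)···P(y_k) ≠ 0 is O_{P,k,n_0,ε}(N^{k−1+ε}), using the divisor bound τ(m) ≪_ε m^ε. -/
/-!
Fix the left tuple `x`, and let `m = ∏ P(x_i) ≠ 0`, so `|m| ≪ N^(dk)`. Every `y_j` of a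
solution satisfies `P(y_j) ∣ m`; since `P` takes each value at most `d` times, there are at most
`2d·τ(|m|) ≪ N^(ε/k)` candidates for each `y_j`, hence `≪ N^ε` right tuples per left tuple. The
left tuples with a coordinate `≤ n₀` number at most `k n₀ N^(k-1)`, and the solutions with a small
right coordinate are the swaps of those with a small left one.

The divisor bound `τ(n) ≪ n^ε` comes from `τ(n) / n^ε = ∏ (a_p + 1) / p^(ε a_p)`, where by
Bernoulli's inequality every factor is `≤ 1` once `p^ε ≥ 2`, and is uniformly bounded otherwise.
-/

open Finset Polynomial

section Bernoulli

variable {R : Type*} [Field R] [LinearOrder R] [IsStrictOrderedRing R]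

theorem add_one_le_pow_of_two_le {y : R} (hy : 2 ≤ y) (a : ℕ) : (a : R) + 1 ≤ y ^ a := by
  have := one_add_mul_sub_le_pow (by linarith : (-1 : R) ≤ y) a
  nlinarith [(Nat.cast_nonneg a : (0 : R) ≤ a)]

theorem add_one_le_mul_pow {c y : R} (hc : 0 < c) (hy : 1 + c ≤ y) (a : ℕ) :
    (a : R) + 1 ≤ (1 + c⁻¹) * y ^ a := by
  have ha : (0 : R) ≤ a := a.cast_nonneg
  have hbern := one_add_mul_sub_le_pow (by linarith : (-1 : R) ≤ y) a
  calc (a : R) + 1 ≤ (1 + c⁻¹) * (1 + a * c) := by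
        field_simp
        nlinarith [mul_nonneg ha (sq_nonneg c)]
    _ ≤ (1 + c⁻¹) * y ^ a := by gcongr; nlinarith

end Bernoulli

theorem exists_card_divisors_le_mul_rpow {ε : ℝ} (hε : 0 < ε) :
    ∃ C > 0, ∀ n : ℕ, n ≠ 0 → (#n.divisors : ℝ) ≤ C * (n : ℝ) ^ ε := by
  have hc : 0 < (2 : ℝ) ^ ε - 1 := sub_pos.2 (Real.one_lt_rpow (by norm_num) hε)
  set M := 1 + ((2 : ℝ) ^ ε - 1)⁻¹
  have hM : 1 ≤ M := le_add_of_nonneg_right (inv_nonneg.2 hc.le)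
  set K := ⌈(2 : ℝ) ^ ε⁻¹⌉₊
  refine ⟨M ^ K, by positivity, fun n hn => ?_⟩
  have hsmall : #{p ∈ n.primeFactors | ((p : ℕ) : ℝ) ^ ε < 2} ≤ K := by
    refine (card_le_card fun p hp => ?_).trans (card_range K).le
    rw [mem_filter] at hp
    rw [mem_range, Nat.lt_ceil, Real.lt_rpow_inv_iff_of_pos p.cast_nonneg zero_le_two hε]
    exact hp.2
  have hn_rpow : (n : ℝ) ^ ε = ∏ p ∈ n.primeFactors, ((p : ℝ) ^ ε) ^ n.factorization p := by
    conv_lhs => rw [← Nat.prod_factorization_pow_eq_self hn]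
    rw [Nat.prod_factorization_eq_prod_primeFactors, Nat.cast_prod,
      ← Real.finsetProd_rpow _ _ fun p _ => by positivity]
    exact prod_congr rfl fun p _ => by
      rw [Nat.cast_pow, Real.rpow_pow_comm p.cast_nonneg]
  calc (#n.divisors : ℝ) = ∏ p ∈ n.primeFactors, ((n.factorization p : ℝ) + 1) := by
        rw [Nat.card_divisors hn]; push_cast; rfl
    _ ≤ ∏ p ∈ n.primeFactors,
          (if (p : ℝ) ^ ε < 2 then M else 1) * ((p : ℝ) ^ ε) ^ n.factorization p := by
        refine prod_le_prod (fun _ _ => by positivity) fun p hp => ?_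
        have hp2 : (2 : ℝ) ≤ p := by exact_mod_cast (Nat.prime_of_mem_primeFactors hp).two_le
        split_ifs with hlt
        · refine add_one_le_mul_pow hc ?_ _
          rw [add_sub_cancel]
          exact Real.rpow_le_rpow zero_le_two hp2 hε.le
        · rw [one_mul]
          exact add_one_le_pow_of_two_le (not_lt.1 hlt) _
    _ = M ^ #{p ∈ n.primeFactors | ((p : ℕ) : ℝ) ^ ε < 2} * (n : ℝ) ^ ε := by
        rw [prod_mul_distrib, prod_ite, prod_const, prod_const_one, mul_one, hn_rpow]
    _ ≤ M ^ K * (n : ℝ) ^ ε := by gcongr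

theorem Polynomial.card_filter_eval_eq_le {R : Type*} [CommRing R] [IsDomain R] [DecidableEq R]
    {P : R[X]} (hP : 0 < P.natDegree) (s : Finset R) (v : R) :
    #{x ∈ s | P.eval x = v} ≤ P.natDegree := by
  have hPv : P - C v ≠ 0 := fun h => by
    rw [sub_eq_zero] at h
    simp [h] at hP
  rw [← natDegree_sub_C (a := v)]
  refine card_le_degree_of_subset_roots fun x hx => ?_
  rw [mem_roots hPv, IsRoot, eval_sub, eval_C, sub_eq_zero]
  exact (mem_filter.1 hx).2

theorem Polynomial.card_filter_eval_dvd_le {P : ℤ[X]} (hP : 0 < P.natDegree) (s : Finset ℤ)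
    {m : ℤ} (hm : m ≠ 0) : #{x ∈ s | P.eval x ∣ m} ≤ 2 * P.natDegree * #m.natAbs.divisors := by
  -- `x ↦ |P x|` maps into the divisors of `|m|`, and each value `a` is attained only where
  -- `P x = a` or `P x = -a`
  refine card_le_mul_card_image_of_maps_to (f := fun x => (P.eval x).natAbs)
    (fun x hx => Nat.mem_divisors.2
      ⟨Int.natAbs_dvd_natAbs.2 (mem_filter.1 hx).2, Int.natAbs_ne_zero.2 hm⟩) _ fun a _ => ?_
  calc _ ≤ #({x ∈ s | P.eval x = a} ∪ {x ∈ s | P.eval x = -a}) := by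
        refine card_le_card fun x hx => ?_
        simp only [mem_filter, mem_union] at hx ⊢
        rcases Int.natAbs_eq_iff.1 hx.2 with h | h
        exacts [Or.inl ⟨hx.1.1, h⟩, Or.inr ⟨hx.1.1, h⟩]
    _ ≤ _ := (card_union_le _ _).trans <| by
        rw [two_mul]
        exact add_le_add (card_filter_eval_eq_le hP _ _) (card_filter_eval_eq_le hP _ _)

theorem Polynomial.abs_eval_le_mul_pow {R : Type*} [CommRing R] [LinearOrder R]
    [IsStrictOrderedRing R] (P : R[X]) {x N : R} (hx : |x| ≤ N) (hN : 1 ≤ N) :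
    |P.eval x| ≤ (∑ i ∈ range (P.natDegree + 1), |P.coeff i|) * N ^ P.natDegree := by
  rw [eval_eq_sum_range, sum_mul]
  refine (abs_sum_le_sum_abs _ _).trans (sum_le_sum fun i hi => ?_)
  rw [abs_mul, abs_pow]
  gcongr
  calc |x| ^ i ≤ N ^ i := by gcongr
    _ ≤ N ^ P.natDegree := pow_le_pow_right₀ hN (Nat.lt_succ_iff.1 (mem_range.1 hi))

theorem card_filter_exists_le_le (k n₀ N : ℕ) :
    #{x ∈ Fintype.piFinset fun _ : Fin k => Icc 1 N | ∃ i, x i ≤ n₀} ≤ k * n₀ * N ^ (k - 1) := by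
  calc _ ≤ #(univ.biUnion fun i : Fin k =>
          Fintype.piFinset (Function.update (fun _ => Icc 1 N) i (Icc 1 n₀))) := by
        refine card_le_card fun x hx => ?_
        simp only [mem_filter, Fintype.mem_piFinset] at hx
        obtain ⟨hx, i, hi⟩ := hx
        simp only [mem_biUnion, mem_univ, true_and, Fintype.mem_piFinset]
        refine ⟨i, fun j => ?_⟩
        rcases eq_or_ne j i with rfl | hj
        · simpa [hi] using (mem_Icc.1 (hx j)).1
        · simpa [hj] using hx j
    _ ≤ ∑ i : Fin k, #(Fintype.piFinset (Function.update (fun _ => Icc 1 N) i (Icc 1 n₀))) :=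
        card_biUnion_le
    _ = ∑ _i : Fin k, n₀ * N ^ (k - 1) := by
        refine sum_congr rfl fun i _ => ?_
        simp [Fintype.card_piFinset, Function.apply_update (fun _ s => #s), prod_update_of_mem,
          card_sdiff_of_subset]
    _ = _ := by simp [mul_assoc]

theorem card_filter_prod_eval_eq_le (P : ℤ[X]) (k : ℕ) (s : Finset ℕ) (m : ℤ) :
    #{y ∈ Fintype.piFinset fun _ : Fin k => s | ∏ i, P.eval (y i : ℤ) = m} ≤
      #{z ∈ s | P.eval ((z : ℕ) : ℤ) ∣ m} ^ k := by
  calc _ ≤ #(Fintype.piFinset fun _ : Fin k => {z ∈ s | P.eval ((z : ℕ) : ℤ) ∣ m}) := by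
        refine card_le_card fun y hy => ?_
        simp only [mem_filter, Fintype.mem_piFinset] at hy ⊢
        exact fun i => ⟨hy.1 i, hy.2 ▸ dvd_prod_of_mem _ (mem_univ i)⟩
    _ = _ := by simp

theorem card_solutions_of_exists_fst_le_le (P : ℤ[X]) (k n₀ N : ℕ) {R : ℝ} (hR : 0 ≤ R)
    (hD : ∀ x ∈ Fintype.piFinset fun _ : Fin k => Icc 1 N, ∏ i, P.eval (x i : ℤ) ≠ 0 →
      (#{y ∈ Icc 1 N | P.eval ((y : ℕ) : ℤ) ∣ ∏ i, P.eval (x i : ℤ)} : ℝ) ≤ R) :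
    (#{t ∈ (Fintype.piFinset fun _ : Fin k => Icc 1 N) ×ˢ
        (Fintype.piFinset fun _ : Fin k => Icc 1 N) |
        (∃ i, t.1 i ≤ n₀) ∧ ∏ i, P.eval (t.1 i : ℤ) = ∏ i, P.eval (t.2 i : ℤ) ∧
          ∏ i, P.eval (t.1 i : ℤ) ≠ 0} : ℝ) ≤ k * n₀ * N ^ (k - 1) * R ^ k := by
  set box := Fintype.piFinset fun _ : Fin k => Icc 1 N
  set X := {x ∈ box | (∃ i, x i ≤ n₀) ∧ ∏ i, P.eval (x i : ℤ) ≠ 0}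
  set Y := fun x : Fin k → ℕ => {y ∈ box | ∏ i, P.eval (y i : ℤ) = ∏ i, P.eval (x i : ℤ)}
  have hsub : {t ∈ box ×ˢ box | (∃ i, t.1 i ≤ n₀) ∧ ∏ i, P.eval (t.1 i : ℤ) =
      ∏ i, P.eval (t.2 i : ℤ) ∧ ∏ i, P.eval (t.1 i : ℤ) ≠ 0} ⊆ X.biUnion fun x => {x} ×ˢ Y x := by
    rintro ⟨x, y⟩ ht
    simp only [mem_filter, mem_product] at ht
    obtain ⟨⟨hx, hy⟩, hlow, heq, hne⟩ := ht
    simp only [X, Y, mem_biUnion, mem_product, mem_singleton, mem_filter]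
    exact ⟨x, ⟨hx, hlow, hne⟩, rfl, hy, heq.symm⟩
  have hY : ∀ x ∈ X, (#({x} ×ˢ Y x) : ℝ) ≤ R ^ k := fun x hx => by
    obtain ⟨hx, -, hne⟩ := mem_filter.1 hx
    rw [card_product, card_singleton, one_mul]
    calc (#(Y x) : ℝ)
        ≤ (#{y ∈ Icc 1 N | P.eval ((y : ℕ) : ℤ) ∣ ∏ i, P.eval (x i : ℤ)} : ℝ) ^ k := by
          exact_mod_cast card_filter_prod_eval_eq_le P k _ _
      _ ≤ R ^ k := by gcongr; exact hD x hx hne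
  have hX : #X ≤ k * n₀ * N ^ (k - 1) :=
    (card_le_card fun x hx => mem_filter.2 ⟨(mem_filter.1 hx).1, (mem_filter.1 hx).2.1⟩).trans
      (card_filter_exists_le_le k n₀ N)
  calc _ ≤ (∑ x ∈ X, #({x} ×ˢ Y x) : ℝ) := by
        exact_mod_cast (card_le_card hsub).trans card_biUnion_le
    _ ≤ ∑ _x ∈ X, R ^ k := sum_le_sum hY
    _ = #X * R ^ k := by rw [sum_const, nsmul_eq_mul]
    _ ≤ k * n₀ * N ^ (k - 1) * R ^ k := by gcongr; exact_mod_cast hX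

theorem card_solutions_le (P : ℤ[X]) (k n₀ N : ℕ) {R : ℝ} (hR : 0 ≤ R)
    (hD : ∀ x ∈ Fintype.piFinset fun _ : Fin k => Icc 1 N, ∏ i, P.eval (x i : ℤ) ≠ 0 →
      (#{y ∈ Icc 1 N | P.eval ((y : ℕ) : ℤ) ∣ ∏ i, P.eval (x i : ℤ)} : ℝ) ≤ R) :
    (Nat.card {t : (Fin k → ℕ) × (Fin k → ℕ) //
        (∀ i, t.1 i ∈ Icc 1 N) ∧ (∀ i, t.2 i ∈ Icc 1 N) ∧ (∃ i, t.1 i ≤ n₀ ∨ t.2 i ≤ n₀) ∧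
          (∏ i, P.eval (t.1 i : ℤ)) = (∏ i, P.eval (t.2 i : ℤ)) ∧
          (∏ i, P.eval (t.1 i : ℤ)) ≠ 0} : ℝ) ≤ 2 * (k * n₀ * N ^ (k - 1) * R ^ k) := by
  set T := {t ∈ (Fintype.piFinset fun _ : Fin k => Icc 1 N) ×ˢ
    (Fintype.piFinset fun _ : Fin k => Icc 1 N) |
    (∃ i, t.1 i ≤ n₀) ∧ ∏ i, P.eval (t.1 i : ℤ) = ∏ i, P.eval (t.2 i : ℤ) ∧
      ∏ i, P.eval (t.1 i : ℤ) ≠ 0}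
  -- a solution with a small `y`-coordinate is the swap of one with a small `x`-coordinate
  have hcard : Nat.card {t : (Fin k → ℕ) × (Fin k → ℕ) //
      (∀ i, t.1 i ∈ Icc 1 N) ∧ (∀ i, t.2 i ∈ Icc 1 N) ∧ (∃ i, t.1 i ≤ n₀ ∨ t.2 i ≤ n₀) ∧
        (∏ i, P.eval (t.1 i : ℤ)) = (∏ i, P.eval (t.2 i : ℤ)) ∧
        (∏ i, P.eval (t.1 i : ℤ)) ≠ 0} ≤ #T + #(T.image Prod.swap) := by
    refine (Nat.card_mono (T ∪ T.image Prod.swap).finite_toSet fun t ht => ?_).trans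
      ((Nat.card_eq_finsetCard _).trans_le (card_union_le _ _))
    obtain ⟨hx, hy, ⟨i, hi | hi⟩, heq, hne⟩ := ht
    · refine mem_union_left _ ?_
      simp only [T, mem_filter, mem_product, Fintype.mem_piFinset]
      exact ⟨⟨hx, hy⟩, ⟨i, hi⟩, heq, hne⟩
    · refine mem_union_right _ (mem_image.2 ⟨t.swap, ?_, t.swap_swap⟩)
      simp only [T, mem_filter, mem_product, Fintype.mem_piFinset]
      exact ⟨⟨hy, hx⟩, ⟨i, hi⟩, heq.symm, heq ▸ hne⟩
  rw [card_image_of_injective _ Prod.swap_injective, ← two_mul] at hcard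
  calc _ ≤ (2 * #T : ℝ) := by exact_mod_cast hcard
    _ ≤ _ := by gcongr; exact card_solutions_of_exists_fst_le_le P k n₀ N hR hD

theorem exists_card_filter_eval_dvd_prod_le {P : ℤ[X]} (hP : 0 < P.natDegree) (k : ℕ) {δ : ℝ}
    (hδ : 0 < δ) : ∃ C > 0, ∀ N : ℕ, 1 ≤ N → ∀ x ∈ Fintype.piFinset fun _ : Fin k => Icc 1 N,
      ∏ i, P.eval (x i : ℤ) ≠ 0 →
        (#{y ∈ Icc 1 N | P.eval ((y : ℕ) : ℤ) ∣ ∏ i, P.eval (x i : ℤ)} : ℝ) ≤ C * (N : ℝ) ^ δ := by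
  set d := P.natDegree
  set A := ∑ i ∈ range (d + 1), |P.coeff i|
  have hA : 0 < A := (abs_pos.2 (leadingCoeff_ne_zero.2 (ne_zero_of_natDegree_gt hP))).trans_le
    (single_le_sum (f := fun i => |P.coeff i|) (fun i _ => abs_nonneg _) (self_mem_range_succ d))
  -- the products have size at most `A ^ k * N ^ (d * k)`; dividing by `d * k + 1` absorbs the power
  set δ' := δ / (d * k + 1)
  obtain ⟨C, hC, hτ⟩ := exists_card_divisors_le_mul_rpow (by positivity : 0 < δ')
  refine ⟨2 * d * C * ((A : ℝ) ^ k) ^ δ', by positivity, fun N hN x hx hm => ?_⟩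
  set m := ∏ i, P.eval (x i : ℤ)
  have hm_le : |m| ≤ A ^ k * (N : ℤ) ^ (d * k) := by
    rw [pow_mul, ← mul_pow]
    calc |m| = ∏ i, |P.eval (x i : ℤ)| := abs_prod _ _
      _ ≤ ∏ _i : Fin k, A * (N : ℤ) ^ d := prod_le_prod (fun _ _ => abs_nonneg _) fun i _ => by
          have hxi := mem_Icc.1 (Fintype.mem_piFinset.1 hx i)
          exact abs_eval_le_mul_pow P (by rw [Nat.abs_cast]; exact_mod_cast hxi.2)
            (by exact_mod_cast hN)
      _ = (A * (N : ℤ) ^ d) ^ k := by rw [prod_const, card_univ, Fintype.card_fin]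
  have hN_pow : ((N : ℝ) ^ (d * k)) ^ δ' ≤ (N : ℝ) ^ δ := by
    rw [← Real.rpow_natCast, ← Real.rpow_mul N.cast_nonneg]
    refine Real.rpow_le_rpow_of_exponent_le (by exact_mod_cast hN) ?_
    rw [Nat.cast_mul, mul_div_assoc', div_le_iff₀ (by positivity)]
    nlinarith
  have hD_eq : #{y ∈ Icc 1 N | P.eval ((y : ℕ) : ℤ) ∣ m} =
      #{z ∈ (Icc 1 N).map Nat.castEmbedding | P.eval z ∣ m} := by
    rw [filter_map, card_map]
    rfl
  calc (#{y ∈ Icc 1 N | P.eval ((y : ℕ) : ℤ) ∣ m} : ℝ) ≤ 2 * d * #m.natAbs.divisors := by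
        rw [hD_eq]
        exact_mod_cast card_filter_eval_dvd_le hP _ hm
    _ ≤ 2 * d * (C * (m.natAbs : ℝ) ^ δ') := by gcongr; exact hτ _ (Int.natAbs_ne_zero.2 hm)
    _ ≤ 2 * d * (C * ((A : ℝ) ^ k * (N : ℝ) ^ (d * k)) ^ δ') := by
        gcongr
        rw [Nat.cast_natAbs]
        exact_mod_cast hm_le
    _ = 2 * d * C * ((A : ℝ) ^ k) ^ δ' * ((N : ℝ) ^ (d * k)) ^ δ' := by
        rw [Real.mul_rpow (by positivity) (by positivity)]
        ring
    _ ≤ 2 * d * C * ((A : ℝ) ^ k) ^ δ' * (N : ℝ) ^ δ := by gcongr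

theorem stmt_10_general (P : Polynomial ℤ) (hd : 2 ≤ P.natDegree)
    (k : ℕ) (hk : 1 ≤ k) (n₀ : ℕ) :
    ∀ ε : ℝ, 0 < ε → ∃ C : ℝ, 0 < C ∧ ∀ N : ℕ, 1 ≤ N →
      (Nat.card {t : (Fin k → ℕ) × (Fin k → ℕ) //
          (∀ i, t.1 i ∈ Finset.Icc 1 N) ∧ (∀ i, t.2 i ∈ Finset.Icc 1 N) ∧
          (∃ i, t.1 i ≤ n₀ ∨ t.2 i ≤ n₀) ∧
          (∏ i, P.eval (t.1 i : ℤ)) = (∏ i, P.eval (t.2 i : ℤ)) ∧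
          (∏ i, P.eval (t.1 i : ℤ)) ≠ 0} : ℝ)
        ≤ C * (N : ℝ) ^ ((k : ℝ) - 1 + ε) := by
  intro ε hε
  have hk' : (0 : ℝ) < k := by exact_mod_cast hk
  obtain ⟨C, hC, hD⟩ :=
    exists_card_filter_eval_dvd_prod_le (by omega : 0 < P.natDegree) k (div_pos hε hk')
  refine ⟨2 * k * (n₀ + 1) * C ^ k, by positivity, fun N hN => ?_⟩
  have hN' : (0 : ℝ) < N := by exact_mod_cast hN
  have hN_pow : (N : ℝ) ^ (k - 1) = (N : ℝ) ^ ((k : ℝ) - 1) := by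
    rw [← Real.rpow_natCast, Nat.cast_sub hk, Nat.cast_one]
  calc _ ≤ 2 * (k * n₀ * N ^ (k - 1) * (C * (N : ℝ) ^ (ε / k)) ^ k) :=
        card_solutions_le P k n₀ N (by positivity) (hD N hN)
    _ = 2 * k * n₀ * C ^ k * ((N : ℝ) ^ ((k : ℝ) - 1) * (N : ℝ) ^ ε) := by
        rw [mul_pow, ← Real.rpow_mul_natCast hN'.le, div_mul_cancel₀ _ hk'.ne', hN_pow]
        ring
    _ ≤ 2 * k * (n₀ + 1) * C ^ k * ((N : ℝ) ^ ((k : ℝ) - 1) * (N : ℝ) ^ ε) := by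
        gcongr
        linarith
    _ = _ := by rw [← Real.rpow_add hN']

theorem stmt_10 (P : Polynomial ℤ) (hd : 2 ≤ P.natDegree)
    (hroots : 2 ≤ (P.map (Int.castRingHom ℂ)).roots.toFinset.card)
    (k : ℕ) (hk : 1 ≤ k) (n₀ : ℕ) :
    ∀ ε : ℝ, 0 < ε → ∃ C : ℝ, 0 < C ∧ ∀ N : ℕ, 1 ≤ N →
      (Nat.card {t : (Fin k → ℕ) × (Fin k → ℕ) //
          (∀ i, t.1 i ∈ Finset.Icc 1 N) ∧ (∀ i, t.2 i ∈ Finset.Icc 1 N) ∧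
          (∃ i, t.1 i ≤ n₀ ∨ t.2 i ≤ n₀) ∧
          (∏ i, P.eval (t.1 i : ℤ)) = (∏ i, P.eval (t.2 i : ℤ)) ∧
          (∏ i, P.eval (t.1 i : ℤ)) ≠ 0} : ℝ)
        ≤ C * (N : ℝ) ^ ((k : ℝ) - 1 + ε) :=
  stmt_10_general P hd k hk n₀
end

section
/- Let P ∈ ℤ[x] of degree d with positive leading coefficient and at least two distinct complex roots, and suppose P(n) > 0 for n > 0. For positive integers λ, N and z, define G(N, z) as the number of triples (x, a, b) ∈ {1,…,N} × {1,…,λ}² with a·z = b·P(x) and a < b. Assuming that for distinct positive integers a < b every complex irreducible component of the curve a·P(y) = b·P(x) contains at most C_ε·N^{1/2+ε} integral points in {1,…,N}², conclude that ∑_{y=1}^{N} G(N, P(y)) ≤ C'_ε · λ² · N^{1/2+ε}. -/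
/-!
A triple `(x, a, b)` counted by `G(N, P(y))` is the same as a point `(x, y)` on the curve
`a P(y) = b P(x)`. Exchanging the order of summation therefore turns `∑_y G(N, P(y))` into a sum,
over the at most `λ²` pairs `a < b`, of integral point counts on these curves, each of which the
Bombieri–Pila-type hypothesis bounds by `C N^{1/2+ε}`.
-/

open Finset

theorem Finset.sum_natCard_triples_eq_sum_sum_natCard_pairs {α β : Type*} (S : Finset α)
    (T : Finset β) (Q : α → α × β × β → Prop) :
    ∑ y ∈ S, Nat.card {t : α × β × β // t.1 ∈ S ∧ t.2.1 ∈ T ∧ t.2.2 ∈ T ∧ Q y t} =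
      ∑ a ∈ T, ∑ b ∈ T, Nat.card {p : α × α // p.1 ∈ S ∧ p.2 ∈ S ∧ Q p.2 (p.1, a, b)} := by
  classical
  have htriples : ∀ y, Nat.card {t : α × β × β // t.1 ∈ S ∧ t.2.1 ∈ T ∧ t.2.2 ∈ T ∧
      Q y t} = #{t ∈ S ×ˢ T ×ˢ T | Q y t} := fun y =>
    Nat.subtype_card _ fun t => by simp [and_assoc]
  have hpairs : ∀ a b, Nat.card {p : α × α // p.1 ∈ S ∧ p.2 ∈ S ∧ Q p.2 (p.1, a, b)} =
      #{p ∈ S ×ˢ S | Q p.2 (p.1, a, b)} := fun a b =>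
    Nat.subtype_card _ fun p => by simp [and_assoc]
  simp only [htriples, hpairs, card_filter]
  rw [sum_comm, sum_product S (T ×ˢ T), sum_comm, sum_product T T]
  simp only [sum_product]

theorem stmt_15_general (P : Polynomial ℤ) (ε : ℝ) (C : ℝ) (hC : 0 ≤ C)
    (hBP : ∀ N a b : ℕ, 0 < N → 0 < a → a < b →
      (Nat.card {p : ℕ × ℕ // p.1 ∈ Finset.Icc 1 N ∧ p.2 ∈ Finset.Icc 1 N ∧
          (a : ℤ) * P.eval (p.2 : ℤ) = (b : ℤ) * P.eval (p.1 : ℤ)} : ℝ)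
        ≤ C * (N : ℝ) ^ ((1 : ℝ) / 2 + ε)) :
    ∃ C' : ℝ, 0 < C' ∧ ∀ N lam : ℕ, 0 < N → 0 < lam →
      ((∑ y ∈ Finset.Icc 1 N,
        Nat.card {t : ℕ × ℕ × ℕ // t.1 ∈ Finset.Icc 1 N ∧
          t.2.1 ∈ Finset.Icc 1 lam ∧ t.2.2 ∈ Finset.Icc 1 lam ∧
          (t.2.1 : ℤ) * P.eval (y : ℤ) = (t.2.2 : ℤ) * P.eval (t.1 : ℤ) ∧
          t.2.1 < t.2.2}) : ℝ)
        ≤ C' * (lam : ℝ) ^ 2 * (N : ℝ) ^ ((1 : ℝ) / 2 + ε) := by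
  refine ⟨C + 1, by linarith, fun N lam hN _ => ?_⟩
  set M := C * (N : ℝ) ^ ((1 : ℝ) / 2 + ε)
  have hM : 0 ≤ M := by positivity
  have hcurve : ∀ a ∈ Icc 1 lam, ∀ b ∈ Icc 1 lam,
      (Nat.card {p : ℕ × ℕ // p.1 ∈ Icc 1 N ∧ p.2 ∈ Icc 1 N ∧
        (a : ℤ) * P.eval (p.2 : ℤ) = b * P.eval (p.1 : ℤ) ∧ a < b} : ℝ) ≤ M := by
    intro a ha b _
    by_cases hab : a < b
    · simpa only [hab, and_true] using hBP N a b hN (mem_Icc.mp ha).1 hab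
    · simpa [hab] using hM
  rw [← Nat.cast_sum, sum_natCard_triples_eq_sum_sum_natCard_pairs, Nat.cast_sum]
  calc _ ≤ ∑ a ∈ Icc 1 lam, ∑ b ∈ Icc 1 lam, M := by
        push_cast; exact sum_le_sum fun a ha => sum_le_sum (hcurve a ha)
    _ = lam ^ 2 * M := by
      simp only [sum_const, Nat.card_Icc, add_tsub_cancel_right, nsmul_eq_mul]; ring
    _ ≤ (C + 1) * lam ^ 2 * (N : ℝ) ^ ((1 : ℝ) / 2 + ε) := by
      have : (0 : ℝ) ≤ lam ^ 2 * (N : ℝ) ^ ((1 : ℝ) / 2 + ε) := by positivity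
      simp only [M]; nlinarith

theorem stmt_15 (P : Polynomial ℤ) (hd : 2 ≤ P.natDegree) (hlc : 0 < P.leadingCoeff)
    (hroots : 2 ≤ (P.map (Int.castRingHom ℂ)).roots.toFinset.card)
    (hpos : ∀ n : ℤ, 0 < n → 0 < P.eval n)
    (ε : ℝ) (hε : 0 < ε) (C : ℝ) (hC : 0 ≤ C)
    (hBP : ∀ N a b : ℕ, 0 < N → 0 < a → a < b →
      (Nat.card {p : ℕ × ℕ // p.1 ∈ Finset.Icc 1 N ∧ p.2 ∈ Finset.Icc 1 N ∧
          (a : ℤ) * P.eval (p.2 : ℤ) = (b : ℤ) * P.eval (p.1 : ℤ)} : ℝ)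
        ≤ C * (N : ℝ) ^ ((1 : ℝ) / 2 + ε)) :
    ∃ C' : ℝ, 0 < C' ∧ ∀ N lam : ℕ, 0 < N → 0 < lam →
      ((∑ y ∈ Finset.Icc 1 N,
        Nat.card {t : ℕ × ℕ × ℕ // t.1 ∈ Finset.Icc 1 N ∧
          t.2.1 ∈ Finset.Icc 1 lam ∧ t.2.2 ∈ Finset.Icc 1 lam ∧
          (t.2.1 : ℤ) * P.eval (y : ℤ) = (t.2.2 : ℤ) * P.eval (t.1 : ℤ) ∧
          t.2.1 < t.2.2}) : ℝ)
        ≤ C' * (lam : ℝ) ^ 2 * (N : ℝ) ^ ((1 : ℝ) / 2 + ε) :=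
  stmt_15_general P ε C hC hBP
end

section
/- Let P ∈ ℤ[x] have degree d ≥ 2, at least two distinct complex roots, and maximal root multiplicity e. Let Q ∈ ℤ[x] be squarefree with Q ∣ P ∣ Q^e and discriminant Δ_Q. Then for all positive integers z and N, the number of x ∈ {1,…,N} with z ∣ P(x) is at most d^{ω(z)}·|Δ_Q|^{1/2}·(1 + N/z^{1/e}). -/
/-!
Let `L = Nat.ceilRoot e z = ∏ p^⌈v_p(z)/e⌉`, the least `L` with `z ∣ L^e`, so `z^{1/e} ≤ L ∣ z`.
If `z ∣ P(x)` then `z ∣ Q(x)^e`, hence `L ∣ Q(x)`. The residues of such `x` modulo `L` are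
roots of `Q` mod `L`, of which Huxley's bound allows at most `d^{ω(L)} |Δ|^{1/2} ≤ d^{ω(z)} |Δ|^{1/2}`,
and each residue class meets `{1, …, N}` at most `N / L + 1 ≤ 1 + N / z^{1/e}` times.
-/

open Finset Polynomial

theorem Int.ceilRoot_dvd_of_dvd_pow {z e : ℕ} {a : ℤ} (he : e ≠ 0) (h : (z : ℤ) ∣ a ^ e) :
    (Nat.ceilRoot e z : ℤ) ∣ a :=
  Int.natCast_dvd.mpr <| (Nat.dvd_pow_iff_ceilRoot_dvd he).mp <| by
    simpa [Int.natAbs_pow] using Int.natCast_dvd.mp h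

theorem Real.rpow_one_div_le_ceilRoot {z e : ℕ} (he : e ≠ 0) :
    (z : ℝ) ^ ((1 : ℝ) / e) ≤ Nat.ceilRoot e z := by
  rw [one_div, Real.rpow_inv_le_iff_of_pos (Nat.cast_nonneg _) (Nat.cast_nonneg _)
    (by positivity), Real.rpow_natCast]
  obtain rfl | hz := Nat.eq_zero_or_pos z
  · simp
  have hroot : 0 < Nat.ceilRoot e z := Nat.pos_of_ne_zero (Nat.ceilRoot_ne_zero.2 ⟨he, hz.ne'⟩)
  exact_mod_cast Nat.le_of_dvd (pow_pos hroot e) (Nat.dvd_ceilRoot_pow he)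

theorem Polynomial.natCast_dvd_eval_mod {Q : ℤ[X]} {L x : ℕ} (h : (L : ℤ) ∣ Q.eval (x : ℤ)) :
    (L : ℤ) ∣ Q.eval ((x % L : ℕ) : ℤ) := by
  have hx : (L : ℤ) ∣ (x : ℤ) - ((x % L : ℕ) : ℤ) := by
    push_cast
    exact (Int.mod_modEq _ _).dvd
  exact (dvd_sub_right h).mp (hx.trans (sub_dvd_eval_sub _ _ Q))

theorem card_filter_Icc_le_mul_card_filter_range {p : ℕ → Prop} [DecidablePred p] {L : ℕ}
    (hL : 0 < L) (hp : ∀ x, p x → p (x % L)) (N : ℕ) :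
    #{x ∈ Icc 1 N | p x} ≤ (N / L + 1) * #{r ∈ range L | p r} := by
  calc #{x ∈ Icc 1 N | p x}
      ≤ #({r ∈ range L | p r} ×ˢ range (N / L + 1)) := by
        refine card_le_card_of_injOn (fun x => (x % L, x / L)) (fun x hx => ?_) ?_
        · simp only [mem_coe, mem_filter, mem_Icc] at hx
          simp only [mem_coe, mem_product, mem_filter, mem_range]
          exact ⟨⟨Nat.mod_lt _ hL, hp x hx.2⟩,
            Nat.lt_succ_of_le (Nat.div_le_div_right hx.1.2)⟩
        · intro x _ y _ hxy
          simp only [Prod.mk.injEq] at hxy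
          rw [← Nat.div_add_mod x L, ← Nat.div_add_mod y L, hxy.1, hxy.2]
    _ = (N / L + 1) * #{r ∈ range L | p r} := by rw [card_product, card_range, mul_comm]

theorem stmt_18_general (P Q : Polynomial ℤ) (d : ℕ) (hdeg : P.natDegree = d) (hd : 2 ≤ d)
    (e : ℕ)
    (hPQ : P ∣ Q ^ e)
    (Δ : ℤ)
    (hHux : ∀ ℓ : ℕ, 0 < ℓ →
      (((Finset.range ℓ).filter (fun x : ℕ => (ℓ : ℤ) ∣ Q.eval (x : ℤ))).card : ℝ)
        ≤ (d : ℝ) ^ ℓ.primeFactors.card * Real.sqrt |(Δ : ℝ)|) :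
    ∀ z N : ℕ, 0 < z → 0 < N →
      (((Finset.Icc 1 N).filter (fun x : ℕ => (z : ℤ) ∣ P.eval (x : ℤ))).card : ℝ)
        ≤ (d : ℝ) ^ z.primeFactors.card * Real.sqrt |(Δ : ℝ)|
            * (1 + (N : ℝ) / (z : ℝ) ^ ((1 : ℝ) / e)) := by
  intro z N hz _
  have he : e ≠ 0 := by
    rintro rfl
    have := natDegree_eq_zero_of_isUnit (isUnit_of_dvd_one (pow_zero Q ▸ hPQ))
    omega
  set L := Nat.ceilRoot e z
  have hLz : L ∣ z := (Nat.dvd_pow_iff_ceilRoot_dvd he).mp (dvd_pow_self z he)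
  have hL : 0 < L := Nat.pos_of_dvd_of_pos hLz hz
  have hdvd : ∀ x : ℕ, (z : ℤ) ∣ P.eval (x : ℤ) → (L : ℤ) ∣ Q.eval (x : ℤ) := fun x hx =>
    Int.ceilRoot_dvd_of_dvd_pow he (by simpa using hx.trans (eval_dvd hPQ))
  have hcount := card_filter_Icc_le_mul_card_filter_range hL
    (p := fun x : ℕ => (L : ℤ) ∣ Q.eval (x : ℤ)) (fun _ => natCast_dvd_eval_mod) N
  have hresidues : (#{r ∈ range L | (L : ℤ) ∣ Q.eval ((r : ℕ) : ℤ)} : ℝ)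
      ≤ (d : ℝ) ^ z.primeFactors.card * Real.sqrt |(Δ : ℝ)| :=
    (hHux L hL).trans <| by
      gcongr
      · exact_mod_cast (by omega : 1 ≤ d)
      · exact Nat.primeFactors_mono hLz hz.ne'
  have hblock : ((N / L + 1 : ℕ) : ℝ) ≤ 1 + (N : ℝ) / (z : ℝ) ^ ((1 : ℝ) / e) := by
    have : ((N / L : ℕ) : ℝ) ≤ N / (z : ℝ) ^ ((1 : ℝ) / e) :=
      Nat.cast_div_le.trans <| by gcongr; exact Real.rpow_one_div_le_ceilRoot he
    push_cast
    linarith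
  calc _ ≤ (#{x ∈ Icc 1 N | (L : ℤ) ∣ Q.eval ((x : ℕ) : ℤ)} : ℝ) := by
        exact_mod_cast card_le_card (monotone_filter_right _ fun x _ => hdvd x)
    _ ≤ ((N / L + 1 : ℕ) : ℝ) * #{r ∈ range L | (L : ℤ) ∣ Q.eval ((r : ℕ) : ℤ)} := by
        exact_mod_cast hcount
    _ ≤ _ := by rw [mul_comm]; gcongr

theorem stmt_18 (P Q : Polynomial ℤ) (d : ℕ) (hdeg : P.natDegree = d) (hd : 2 ≤ d)
    (hroots : 2 ≤ (P.map (Int.castRingHom ℂ)).roots.toFinset.card)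
    (e : ℕ)
    (he : e = ((P.map (Int.castRingHom ℂ)).roots.toFinset.sup
      (fun r => (P.map (Int.castRingHom ℂ)).rootMultiplicity r)))
    (hsf : Squarefree (Q.map (Int.castRingHom ℂ)))
    (hQP : Q ∣ P) (hPQ : P ∣ Q ^ e)
    (Δ : ℤ) (hΔ0 : Δ ≠ 0)
    (hHux : ∀ ℓ : ℕ, 0 < ℓ →
      (((Finset.range ℓ).filter (fun x : ℕ => (ℓ : ℤ) ∣ Q.eval (x : ℤ))).card : ℝ)
        ≤ (d : ℝ) ^ ℓ.primeFactors.card * Real.sqrt |(Δ : ℝ)|) :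
    ∀ z N : ℕ, 0 < z → 0 < N →
      (((Finset.Icc 1 N).filter (fun x : ℕ => (z : ℤ) ∣ P.eval (x : ℤ))).card : ℝ)
        ≤ (d : ℝ) ^ z.primeFactors.card * Real.sqrt |(Δ : ℝ)|
            * (1 + (N : ℝ) / (z : ℝ) ^ ((1 : ℝ) / e)) :=
  stmt_18_general P Q d hdeg hd e hPQ Δ hHux
end
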